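/- Let A be a primitive PC(-1)-axial algebra (over F with char F ≠ 2, 3) with Frobenius form (·,·) normalized by (a,a) = 1 on primitive axes. Then for every primitive axis a and all x, y ∈ A: (ax)(ay) = (1/4)·( (6(a,xy) - 3(x,y))·a + (a,y)·x + (a,x)·y - 2(a,y)·ax - 2(a,x)·ay - xy + 2·x(ay) + 2·y(ax) ). Moreover, if instead η ≠ -1 (η ∉ {1, 1/2}, char F ≠ 2) and w is the weight homomorphism of A, then (ax)(ay) = (1/4)·( (1-2η)·w(xy)·a - η·w(y)·x - η·w(x)·y + 2η·w(y)·ax + 2η·w(x)·ay - xy + 2·x(ay) + 2·y(ax) ). -/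

import Mathlib

open Submodule

variable {F : Type*} [Field F] {A : Type*} [NonUnitalNonAssocCommRing A]
  [Module F A] [SMulCommClass F A A] [IsScalarTower F A A]

variable (F) in
/-- The `lam`-eigenspace of the adjoint map of `a`. -/
def PCeig (a : A) (lam : F) : Submodule F A where
  carrier := {x : A | a * x = lam • x}
  add_mem' := by
    intro x y hx hy
    simp only [Set.mem_setOf_eq] at hx hy ⊢
    rw [mul_add, hx, hy, smul_add]
  zero_mem' := by simp
  smul_mem' := by
    intro c x hx
    simp only [Set.mem_setOf_eq] at hx ⊢
    rw [mul_smul_comm, hx, smul_smul, smul_smul, mul_comm]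

variable (F) in
/-- The fusion law `PC(η)` for an idempotent (axis) `a`. -/
structure IsPCAxis (η : F) (a : A) : Prop where
  idem : a * a = a
  decomp : PCeig F a 1 ⊔ PCeig F a η ⊔ PCeig F a (1/2 : F) = ⊤
  fus11 : ∀ x ∈ PCeig F a 1, ∀ y ∈ PCeig F a 1, x * y ∈ PCeig F a 1
  fus1e : ∀ x ∈ PCeig F a 1, ∀ y ∈ PCeig F a η, x * y ∈ PCeig F a η
  fus1h : ∀ x ∈ PCeig F a 1, ∀ y ∈ PCeig F a (1/2 : F), x * y ∈ PCeig F a (1/2 : F)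
  fusee : ∀ x ∈ PCeig F a η, ∀ y ∈ PCeig F a η, x * y ∈ PCeig F a 1
  fuseh : ∀ x ∈ PCeig F a η, ∀ y ∈ PCeig F a (1/2 : F), x * y ∈ PCeig F a (1/2 : F)
  fushh : ∀ x ∈ PCeig F a (1/2 : F), ∀ y ∈ PCeig F a (1/2 : F),
    x * y ∈ PCeig F a 1 ⊔ PCeig F a η

variable (F) in
/-- A primitive axis: an axis with `A_1(a) = F·a` (one-dimensional). -/
def IsPrimPCAxis (η : F) (a : A) : Prop :=
  IsPCAxis F η a ∧ a ≠ 0 ∧ PCeig F a 1 = Submodule.span F {a}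

variable (F A) in
/-- A `PC(η)`-axial algebra: generated, as a non-unital algebra, by a (nonempty) set of axes. -/
def IsPCAxialAlgebra (η : F) : Prop :=
  ∃ X : Set A, X.Nonempty ∧ (∀ a ∈ X, IsPCAxis F η a) ∧
    NonUnitalAlgebra.adjoin F X = ⊤

variable (F A) in
/-- A primitive `PC(η)`-axial algebra: generated by a (nonempty) set of primitive axes. -/
def IsPrimPCAxialAlgebra (η : F) : Prop :=
  ∃ X : Set A, X.Nonempty ∧ (∀ a ∈ X, IsPrimPCAxis F η a) ∧
    NonUnitalAlgebra.adjoin F X = ⊤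

/-!
Decompose `x = α a + u + p` and `y = β a + v + q` along `A_1(a) ⊕ A_η(a) ⊕ A_{1/2}(a)`.
Expanding both sides, the products that the fusion law leaves undetermined (`uq`, `pv`, `pq`)
cancel, and the two sides differ only by a multiple of `uv = η (u, v) a`. Since
`(2η - 1)(u, v) = 2 (a, xy) - (x, y) - (a, x)(a, y)`, this gives, for every `η`,
`4 (ax)(ay) = c a - η(a,y) x - η(a,x) y + 2η(a,y) ax + 2η(a,x) ay - xy + 2 x(ay) + 2 y(ax)`
with `c = (1 - 2η)((1 + η)(a,x)(a,y) - η (2 (a,xy) - (x,y)))`, which is the first formula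
when `η = -1`.

For `η ≠ -1`, write a primitive axis `c` as `γ b + u + p` with respect to another one `b`:
the components of `c² = c` together with `(c, c) = 1` force `(η + 1)(γ - 1)³ = 0`, so
`(b, c) = 1`. The Miyamoto involutions permute the primitive axes and `bc` is a combination
of `b`, `c` and `τ_b(c)`, so the primitive axes span `A`. Hence `(x, y) = (a, x)(a, y)`, and
`c` collapses to `(1 - 2η)(a, xy)`.
-/

set_option linter.unusedSectionVars false

theorem mem_PCeig {a x : A} {lam : F} : x ∈ PCeig F a lam ↔ a * x = lam • x := Iff.rfl

theorem one_ne_one_div_two : (1 : F) ≠ 1 / 2 := by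
  intro h
  have h21 : (2 : F) = 1 := inv_eq_one.mp (by rw [inv_eq_one_div, ← h])
  exact one_ne_zero (by linear_combination h21 : (1 : F) = 0)

theorem disjoint_PCeig {a : A} {lam mu : F} (hne : lam ≠ mu) :
    Disjoint (PCeig F a lam) (PCeig F a mu) := by
  rw [Submodule.disjoint_def]
  intro x hx hy
  have h : (lam - mu) • x = 0 := by rw [sub_smul, ← hx, ← hy, sub_self]
  exact (smul_eq_zero.mp h).resolve_left (sub_ne_zero.mpr hne)

theorem eq_zero_of_add_add_eq_zero_of_mem_PCeig {η : F} (hη1 : η ≠ 1) (hηh : η ≠ 1 / 2)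
    {a z u p : A} (hz : z ∈ PCeig F a 1) (hu : u ∈ PCeig F a η)
    (hp : p ∈ PCeig F a (1 / 2 : F)) (h : z + u + p = 0) :
    z = 0 ∧ u = 0 ∧ p = 0 := by
  have hmul : z + η • u + (1 / 2 : F) • p = 0 := by
    rw [← one_smul F z, ← hz, ← hu, ← hp, ← mul_add, ← mul_add, h, mul_zero]
  -- subtracting `a * (z + u + p) = 0` isolates two eigenvectors with distinct eigenvalues
  have hup : (1 - η) • u = -((1 - 1 / 2 : F) • p) := by
    rw [← add_eq_zero_iff_eq_neg, ← sub_eq_zero.mpr (h.trans hmul.symm)]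
    module
  have hu0 : (1 - η) • u = 0 := disjoint_def.mp (disjoint_PCeig hηh) _ (smul_mem _ _ hu)
    (hup ▸ neg_mem (smul_mem _ _ hp))
  have hp0 : (1 - 1 / 2 : F) • p = 0 := by rwa [hu0, eq_comm, neg_eq_zero] at hup
  obtain rfl : u = 0 := (smul_eq_zero.mp hu0).resolve_left (sub_ne_zero.mpr hη1.symm)
  obtain rfl : p = 0 :=
    (smul_eq_zero.mp hp0).resolve_left (sub_ne_zero.mpr one_ne_one_div_two)
  exact ⟨by simpa using h, rfl, rfl⟩

theorem IsPCAxis.self_mem_PCeig_one {η : F} {a : A} (ha : IsPCAxis F η a) :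
    a ∈ PCeig F a 1 := by
  rw [mem_PCeig, ha.idem, one_smul]

theorem IsPCAxis.mem_sup_sup {η : F} {a : A} (ha : IsPCAxis F η a) (x : A) :
    x ∈ PCeig F a 1 ⊔ PCeig F a η ⊔ PCeig F a (1 / 2 : F) := by
  rw [ha.decomp]
  exact mem_top

theorem IsPrimPCAxis.exists_decomposition {η : F} {a : A} (ha : IsPrimPCAxis F η a) (x : A) :
    ∃ (α : F) (u p : A), u ∈ PCeig F a η ∧ p ∈ PCeig F a (1 / 2 : F) ∧
      x = α • a + u + p := by
  obtain ⟨z, hz, p, hp, rfl⟩ := mem_sup.mp (ha.1.mem_sup_sup x)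
  obtain ⟨z1, hz1, u, hu, rfl⟩ := mem_sup.mp hz
  rw [ha.2.2] at hz1
  obtain ⟨α, rfl⟩ := mem_span_singleton.mp hz1
  exact ⟨α, u, p, hu, hp, rfl⟩

theorem four_smul_mul_mul_of_decomp {η α β s : F} (h2 : (2 : F) ≠ 0) {a u v p q x y : A}
    (haa : a * a = a) (hau : a * u = η • u) (hav : a * v = η • v)
    (hap : a * p = (1 / 2 : F) • p) (haq : a * q = (1 / 2 : F) • q) (huv : u * v = s • a)
    (hx : x = α • a + u + p) (hy : y = β • a + v + q) :
    (4 : F) • ((a * x) * (a * y)) =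
      ((1 - 2 * η) * α * β + (1 - 2 * η) ^ 2 * s) • a - (η * β) • x - (η * α) • y +
        (2 * η * β) • (a * x) + (2 * η * α) • (a * y) - x * y +
        (2 : F) • (x * (a * y)) + (2 : F) • (y * (a * x)) := by
  subst hx hy
  simp only [mul_add, add_mul, mul_smul_comm, smul_mul_assoc, haa, hau, hav, hap, haq,
    mul_comm u a, mul_comm v a, mul_comm p a, mul_comm q a, mul_comm v u, mul_comm q u,
    mul_comm v p, mul_comm q p, huv]
  match_scalars <;> field_simp <;> ring

section Frobenius

variable {η : F} (B : A →ₗ[F] A →ₗ[F] F) (hB : ∀ x y z : A, B (x * y) z = B x (y * z))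
include hB

theorem frobenius_eq_zero_of_mem_PCeig {a x y : A} {lam mu : F} (hne : lam ≠ mu)
    (hx : x ∈ PCeig F a lam) (hy : y ∈ PCeig F a mu) : B x y = 0 := by
  have h : lam * B x y = mu * B x y := by
    rw [← smul_eq_mul, ← LinearMap.smul_apply, ← map_smul, ← hx, mul_comm, hB, hy, map_smul,
      smul_eq_mul]
  exact (mul_eq_zero.mp (by linear_combination h : (lam - mu) * B x y = 0)).resolve_left
    (sub_ne_zero.mpr hne)

theorem IsPCAxis.frobenius_smul_add_add {a u v p q : A} (ha : IsPCAxis F η a)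
    (hBa : B a a = 1) (hη1 : η ≠ 1) (hηh : η ≠ 1 / 2) (hu : u ∈ PCeig F a η)
    (hv : v ∈ PCeig F a η) (hp : p ∈ PCeig F a (1 / 2 : F)) (hq : q ∈ PCeig F a (1 / 2 : F))
    (α β : F) :
    B (α • a + u + p) (β • a + v + q) = α * β + B u v + B p q := by
  have h1 := ha.self_mem_PCeig_one
  have h1h := one_ne_one_div_two (F := F)
  simp only [map_add, map_smul, LinearMap.add_apply, LinearMap.smul_apply, smul_eq_mul, hBa,
    frobenius_eq_zero_of_mem_PCeig B hB hη1.symm h1 hv,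
    frobenius_eq_zero_of_mem_PCeig B hB h1h h1 hq,
    frobenius_eq_zero_of_mem_PCeig B hB hη1 hu h1,
    frobenius_eq_zero_of_mem_PCeig B hB hηh hu hq,
    frobenius_eq_zero_of_mem_PCeig B hB h1h.symm hp h1,
    frobenius_eq_zero_of_mem_PCeig B hB (Ne.symm hηh) hp hv]
  ring

theorem IsPrimPCAxis.mul_eq_of_mem_PCeig_eta {a u v : A} (ha : IsPrimPCAxis F η a)
    (hBa : B a a = 1) (hu : u ∈ PCeig F a η) (hv : v ∈ PCeig F a η) :
    u * v = (η * B u v) • a := by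
  have huv : u * v ∈ span F {a} := ha.2.2 ▸ ha.1.fusee u hu v hv
  obtain ⟨μ, hμ⟩ := mem_span_singleton.mp huv
  have hcoeff : μ = η * B u v := by
    have h := hB a u v
    simp only [mem_PCeig.mp hu, ← hμ, map_smul, LinearMap.smul_apply, smul_eq_mul, hBa,
      mul_one] at h
    exact h.symm
  rw [← hμ, hcoeff]

theorem IsPrimPCAxis.mul_eq_of_mem_PCeig_half (hη1 : η ≠ 1) {a p q : A}
    (ha : IsPrimPCAxis F η a) (hBa : B a a = 1) (hp : p ∈ PCeig F a (1 / 2 : F))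
    (hq : q ∈ PCeig F a (1 / 2 : F)) :
    ∃ r ∈ PCeig F a η, p * q = ((1 / 2 : F) * B p q) • a + r := by
  obtain ⟨z, hz, r, hr, hpq⟩ := mem_sup.mp (ha.1.fushh p hp q hq)
  rw [ha.2.2] at hz
  obtain ⟨μ, rfl⟩ := mem_span_singleton.mp hz
  refine ⟨r, hr, ?_⟩
  have hcoeff : μ = (1 / 2 : F) * B p q := by
    have h := hB a p q
    simp only [mem_PCeig.mp hp, ← hpq, map_add, map_smul, LinearMap.smul_apply, smul_eq_mul,
      hBa, mul_one, frobenius_eq_zero_of_mem_PCeig B hB hη1.symm ha.1.self_mem_PCeig_one hr,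
      add_zero] at h
    exact h.symm
  rw [← hpq, hcoeff]

theorem IsPrimPCAxis.four_smul_mul_mul (h2 : (2 : F) ≠ 0) (hη1 : η ≠ 1) (hηh : η ≠ 1 / 2)
    {a : A} (ha : IsPrimPCAxis F η a) (hBa : B a a = 1) (x y : A) :
    (4 : F) • ((a * x) * (a * y)) =
      ((1 - 2 * η) * ((1 + η) * (B a x * B a y) - η * (2 * B a (x * y) - B x y))) • a -
        (η * B a y) • x - (η * B a x) • y + (2 * η * B a y) • (a * x) +
        (2 * η * B a x) • (a * y) - x * y + (2 : F) • (x * (a * y)) +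
        (2 : F) • (y * (a * x)) := by
  obtain ⟨α, u, p, hu, hp, hx⟩ := ha.exists_decomposition x
  obtain ⟨β, v, q, hv, hq, hy⟩ := ha.exists_decomposition y
  have hBax : B a x = α := by
    simpa [hx] using
      ha.1.frobenius_smul_add_add B hB hBa hη1 hηh (zero_mem _) hu (zero_mem _) hp 1 α
  have hBay : B a y = β := by
    simpa [hy] using
      ha.1.frobenius_smul_add_add B hB hBa hη1 hηh (zero_mem _) hv (zero_mem _) hq 1 β
  have hBxy : B x y = α * β + B u v + B p q :=
    hx ▸ hy ▸ ha.1.frobenius_smul_add_add B hB hBa hη1 hηh hu hv hp hq α β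
  have hax : a * x = α • a + η • u + (1 / 2 : F) • p := by
    rw [hx, mul_add, mul_add, mul_smul_comm, ha.1.idem, hu, hp]
  have hBaxy : B a (x * y) = α * β + η * B u v + 1 / 2 * B p q := by
    rw [← hB, hax, hy,
      ha.1.frobenius_smul_add_add B hB hBa hη1 hηh (smul_mem _ _ hu) hv (smul_mem _ _ hp) hq]
    simp only [map_smul, LinearMap.smul_apply, smul_eq_mul]
  have hcoeff : (1 - 2 * η) * α * β + (1 - 2 * η) ^ 2 * (η * B u v) =
      (1 - 2 * η) * ((1 + η) * (α * β) - η * (2 * (α * β + η * B u v + 1 / 2 * B p q) -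
        (α * β + B u v + B p q))) := by field_simp; ring
  rw [four_smul_mul_mul_of_decomp h2 ha.1.idem hu hv hp hq
    (ha.mul_eq_of_mem_PCeig_eta B hB hBa hu hv) hx hy, hBax, hBay, hBxy, hBaxy, hcoeff]

theorem IsPrimPCAxis.frobenius_eq_one (h2 : (2 : F) ≠ 0) (hη1 : η ≠ 1) (hηh : η ≠ 1 / 2)
    (hηm1 : η ≠ -1) (hBnorm : ∀ a : A, IsPrimPCAxis F η a → B a a = 1) {b c : A}
    (hb : IsPrimPCAxis F η b) (hc : IsPrimPCAxis F η c) : B b c = 1 := by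
  have hBb := hBnorm b hb
  obtain ⟨γ, u, p, hu, hp, rfl⟩ := hb.exists_decomposition c
  obtain ⟨r, hr, hpp⟩ := hb.mul_eq_of_mem_PCeig_half B hB hη1 hBb hp hp
  have huu := hb.mul_eq_of_mem_PCeig_eta B hB hBb hu hu
  have hcc : (γ * γ + η * B u u + 1 / 2 * B p p - γ) • b + ((2 * γ * η - 1) • u + r) +
      ((γ - 1) • p + (2 : F) • (u * p)) = 0 := by
    rw [← sub_eq_zero.mpr hc.1.idem]
    simp only [mul_add, add_mul, mul_smul_comm, smul_mul_assoc, hb.1.idem, mem_PCeig.mp hu,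
      mem_PCeig.mp hp, mul_comm u b, mul_comm p b, mul_comm p u, huu, hpp]
    match_scalars <;> field_simp <;> ring
  obtain ⟨hcc1, hccη, hcch⟩ := eq_zero_of_add_add_eq_zero_of_mem_PCeig hη1 hηh
    (smul_mem _ _ hb.1.self_mem_PCeig_one) (add_mem (smul_mem _ _ hu) hr)
    (add_mem (smul_mem _ _ hp) (smul_mem _ _ (hb.1.fuseh u hu p hp))) hcc
  have hidem : γ * γ + η * B u u + 1 / 2 * B p p - γ = 0 :=
    (smul_eq_zero.mp hcc1).resolve_right hb.2.1
  have hr' : r = (1 - 2 * γ * η) • u := by linear_combination (norm := module) hccη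
  have hnorm : γ * γ + B u u + B p p = 1 := by
    rw [← hBnorm _ hc, hb.1.frobenius_smul_add_add B hB hBb hη1 hηh hu hu hp hp]
  have hfrob : 1 / 2 * (1 - γ) * B p p = (1 - 2 * γ * η) * B u u := by
    have h := congrArg (fun z => B z p) hcch
    simp only [map_add, map_smul, LinearMap.add_apply, LinearMap.smul_apply, smul_eq_mul,
      map_zero, LinearMap.zero_apply, hB u p p, hpp, hr',
      frobenius_eq_zero_of_mem_PCeig B hB hη1 hu hb.1.self_mem_PCeig_one] at h
    field_simp
    linear_combination -h
  -- eliminating `B u u` and `B p p` from the three relations leaves `(η + 1) (γ - 1)³ = 0`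
  have hγ : (η + 1) * (γ - 1) ^ 3 = 0 := by
    linear_combination (norm := (field_simp; ring1)) (-3 + γ + 4 * γ * η) * hidem +
      (1 + η - 3 * γ * η) * hnorm + (1 - 2 * η) * hfrob
  obtain rfl : γ = 1 := by
    have := pow_eq_zero_iff (n := 3) (by norm_num) |>.mp
      ((mul_eq_zero.mp hγ).resolve_left fun h => hηm1 (eq_neg_of_add_eq_zero_left h))
    linear_combination this
  simpa using
    hb.1.frobenius_smul_add_add B hB hBb hη1 hηh (zero_mem _) hu (zero_mem _) hp 1 1

end Frobenius

section Automorphism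

variable {A' : Type*} [NonUnitalNonAssocCommRing A'] [Module F A'] [SMulCommClass F A' A']
  [IsScalarTower F A' A'] (e : A ≃ₗ[F] A') (he : ∀ x y : A, e (x * y) = e x * e y)
include he

theorem PCeig_map (a : A) (lam : F) :
    PCeig F (e a) lam = (PCeig F a lam).map (e : A →ₗ[F] A') := by
  ext x
  obtain ⟨x, rfl⟩ := e.surjective x
  rw [mem_map_equiv, e.symm_apply_apply, mem_PCeig, mem_PCeig, ← he, ← map_smul,
    e.injective.eq_iff]

theorem mul_mem_map_of_mul_mem {S T U : Submodule F A}
    (hST : ∀ x ∈ S, ∀ y ∈ T, x * y ∈ U) {x y : A'} (hx : x ∈ S.map (e : A →ₗ[F] A'))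
    (hy : y ∈ T.map (e : A →ₗ[F] A')) :
    x * y ∈ U.map (e : A →ₗ[F] A') := by
  obtain ⟨x, hx, rfl⟩ := hx
  obtain ⟨y, hy, rfl⟩ := hy
  exact ⟨x * y, hST x hx y hy, he x y⟩

theorem IsPrimPCAxis.map {η : F} {a : A} (ha : IsPrimPCAxis F η a) :
    IsPrimPCAxis F η (e a) := by
  obtain ⟨hax, ha0, ha1⟩ := ha
  refine ⟨⟨by rw [← he, hax.idem], ?_, ?_, ?_, ?_, ?_, ?_, ?_⟩,
    (LinearEquiv.map_ne_zero_iff e).mpr ha0, ?_⟩ <;> simp only [PCeig_map e he]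
  · rw [← Submodule.map_sup, ← Submodule.map_sup, hax.decomp, Submodule.map_top,
      LinearEquiv.range]
  · exact fun x hx y hy => mul_mem_map_of_mul_mem e he hax.fus11 hx hy
  · exact fun x hx y hy => mul_mem_map_of_mul_mem e he hax.fus1e hx hy
  · exact fun x hx y hy => mul_mem_map_of_mul_mem e he hax.fus1h hx hy
  · exact fun x hx y hy => mul_mem_map_of_mul_mem e he hax.fusee hx hy
  · exact fun x hx y hy => mul_mem_map_of_mul_mem e he hax.fuseh hx hy
  · intro x hx y hy
    rw [← Submodule.map_sup]
    exact mul_mem_map_of_mul_mem e he hax.fushh hx hy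
  · rw [ha1, map_span, Set.image_singleton]
    rfl

end Automorphism

section Miyamoto

variable {η : F}

/-- The Miyamoto involution of `b`: `8 / (2η - 1) · (ad_b - 1)(ad_b - η)` is twice the projection
onto `A_{1/2}(b)`, so this map fixes `A_1(b) ⊕ A_η(b)` and negates `A_{1/2}(b)`. -/
def miyamoto (η : F) (b : A) : A →ₗ[F] A :=
  LinearMap.id - (8 * (2 * η - 1)⁻¹) •
    ((LinearMap.mulLeft F b - LinearMap.id) ∘ₗ (LinearMap.mulLeft F b - η • LinearMap.id))

theorem miyamoto_apply_of_mem_PCeig {b z : A} {lam : F} (hz : z ∈ PCeig F b lam) :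
    miyamoto η b z = (1 - 8 * (2 * η - 1)⁻¹ * ((lam - 1) * (lam - η))) • z := by
  simp only [miyamoto, LinearMap.sub_apply, LinearMap.smul_apply, LinearMap.comp_apply,
    LinearMap.mulLeft_apply, LinearMap.id_apply, mul_sub, mul_smul_comm, mem_PCeig.mp hz]
  module

theorem miyamoto_apply_of_mem_sup {b z : A} (hz : z ∈ PCeig F b 1 ⊔ PCeig F b η) :
    miyamoto η b z = z := by
  obtain ⟨z1, hz1, zη, hzη, rfl⟩ := mem_sup.mp hz
  rw [map_add, miyamoto_apply_of_mem_PCeig hz1, miyamoto_apply_of_mem_PCeig hzη]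
  module

theorem miyamoto_apply_of_mem_half (h2 : (2 : F) ≠ 0) (hηh : η ≠ 1 / 2) {b z : A}
    (hz : z ∈ PCeig F b (1 / 2 : F)) : miyamoto η b z = -z := by
  have h : 2 * η - 1 ≠ 0 := fun h => hηh (by field_simp; linear_combination h)
  rw [miyamoto_apply_of_mem_PCeig hz, ← neg_one_smul F z]
  congr 1
  field_simp
  ring

theorem IsPCAxis.mul_mem_sup {b : A} (hb : IsPCAxis F η b) {z w : A}
    (hz : z ∈ PCeig F b 1 ⊔ PCeig F b η) (hw : w ∈ PCeig F b 1 ⊔ PCeig F b η) :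
    z * w ∈ PCeig F b 1 ⊔ PCeig F b η := by
  obtain ⟨z1, hz1, zη, hzη, rfl⟩ := mem_sup.mp hz
  obtain ⟨w1, hw1, wη, hwη, rfl⟩ := mem_sup.mp hw
  rw [mul_add, add_mul, add_mul, mul_comm zη w1]
  exact add_mem
    (add_mem (mem_sup_left (hb.fus11 z1 hz1 w1 hw1)) (mem_sup_right (hb.fus1e w1 hw1 zη hzη)))
    (add_mem (mem_sup_right (hb.fus1e z1 hz1 wη hwη)) (mem_sup_left (hb.fusee zη hzη wη hwη)))

theorem IsPCAxis.mul_mem_half {b : A} (hb : IsPCAxis F η b) {z p : A}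
    (hz : z ∈ PCeig F b 1 ⊔ PCeig F b η) (hp : p ∈ PCeig F b (1 / 2 : F)) :
    z * p ∈ PCeig F b (1 / 2 : F) := by
  obtain ⟨z1, hz1, zη, hzη, rfl⟩ := mem_sup.mp hz
  rw [add_mul]
  exact add_mem (hb.fus1h z1 hz1 p hp) (hb.fuseh zη hzη p hp)

theorem IsPCAxis.miyamoto_involutive (h2 : (2 : F) ≠ 0) (hηh : η ≠ 1 / 2) {b : A}
    (hb : IsPCAxis F η b) : Function.Involutive (miyamoto η b) := by
  intro x
  obtain ⟨s, hs, p, hp, rfl⟩ := mem_sup.mp (hb.mem_sup_sup x)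
  simp only [map_add, map_neg, miyamoto_apply_of_mem_sup hs, miyamoto_apply_of_mem_half h2 hηh hp,
    neg_neg]

theorem IsPCAxis.miyamoto_mul (h2 : (2 : F) ≠ 0) (hηh : η ≠ 1 / 2) {b : A}
    (hb : IsPCAxis F η b) (x y : A) :
    miyamoto η b (x * y) = miyamoto η b x * miyamoto η b y := by
  obtain ⟨s, hs, p, hp, rfl⟩ := mem_sup.mp (hb.mem_sup_sup x)
  obtain ⟨t, ht, q, hq, rfl⟩ := mem_sup.mp (hb.mem_sup_sup y)
  have hsq := hb.mul_mem_half hs hq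
  have htp := hb.mul_mem_half ht hp
  have hpq := hb.fushh p hp q hq
  rw [mul_add, add_mul, add_mul, mul_comm p t]
  simp only [map_add, miyamoto_apply_of_mem_sup hs, miyamoto_apply_of_mem_sup ht,
    miyamoto_apply_of_mem_sup (hb.mul_mem_sup hs ht), miyamoto_apply_of_mem_sup hpq,
    miyamoto_apply_of_mem_half h2 hηh hp, miyamoto_apply_of_mem_half h2 hηh hq,
    miyamoto_apply_of_mem_half h2 hηh hsq, miyamoto_apply_of_mem_half h2 hηh htp]
  rw [mul_add, add_mul, add_mul, mul_comm (-p) t]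
  simp only [mul_neg, neg_mul, neg_neg]

end Miyamoto

section Span

variable {η : F}

theorem IsPrimPCAxis.mul_mem_span (h2 : (2 : F) ≠ 0) (hηh : η ≠ 1 / 2) {b c : A}
    (hb : IsPrimPCAxis F η b) (hc : IsPrimPCAxis F η c) :
    b * c ∈ span F {x : A | IsPrimPCAxis F η x} := by
  have hτc : IsPrimPCAxis F η (miyamoto η b c) :=
    hc.map (.ofInvolutive _ (hb.1.miyamoto_involutive h2 hηh)) (hb.1.miyamoto_mul h2 hηh)
  obtain ⟨γ, u, p, hu, hp, rfl⟩ := hb.exists_decomposition c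
  have hτ : miyamoto η b (γ • b + u + p) = γ • b + u - p := by
    rw [map_add, map_add, map_smul,
      miyamoto_apply_of_mem_sup (mem_sup_left hb.1.self_mem_PCeig_one),
      miyamoto_apply_of_mem_sup (mem_sup_right hu), miyamoto_apply_of_mem_half h2 hηh hp,
      sub_eq_add_neg]
  -- `u` and `p` are linear combinations of `b`, `c` and the axis `τ_b c`
  have hbc : b * (γ • b + u + p) =
      (γ * (1 - η)) • b + ((η + 1 / 2) / 2) • (γ • b + u + p) +
        ((η - 1 / 2) / 2) • miyamoto η b (γ • b + u + p) := by
    rw [hτ, mul_add, mul_add, mul_smul_comm, hb.1.idem, hu, hp]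
    match_scalars <;> field_simp <;> ring
  rw [hbc]
  exact add_mem (add_mem (smul_mem _ _ (subset_span hb)) (smul_mem _ _ (subset_span hc)))
    (smul_mem _ _ (subset_span hτc))

theorem span_isPrimPCAxis_eq_top (h2 : (2 : F) ≠ 0) (hηh : η ≠ 1 / 2)
    (hA : IsPrimPCAxialAlgebra F A η) : span F {x : A | IsPrimPCAxis F η x} = ⊤ := by
  obtain ⟨X, -, hX, hXtop⟩ := hA
  set E := span F {x : A | IsPrimPCAxis F η x}
  have hmul : ∀ x y, x ∈ E → y ∈ E → x * y ∈ E := by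
    intro x y hx hy
    refine (?_ : map₂ (LinearMap.mul F A) E E ≤ E) (apply_mem_map₂ _ hx hy)
    rw [map₂_span_span, span_le]
    rintro _ ⟨b, hb, c, hc, rfl⟩
    exact hb.mul_mem_span h2 hηh hc
  have hle : NonUnitalAlgebra.adjoin F X ≤ E.toNonUnitalSubalgebra hmul :=
    NonUnitalAlgebra.adjoin_le fun x hx => subset_span (hX x hx)
  rw [hXtop] at hle
  exact eq_top_iff.mpr fun x _ => hle (NonUnitalAlgebra.mem_top (R := F))

end Span

section RankOne

variable {η : F} (B : A →ₗ[F] A →ₗ[F] F) (hB : ∀ x y z : A, B (x * y) z = B x (y * z))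
include hB

theorem frobenius_eq_of_isPrimPCAxis (h2 : (2 : F) ≠ 0) (hη1 : η ≠ 1) (hηh : η ≠ 1 / 2)
    (hηm1 : η ≠ -1) (hBnorm : ∀ a : A, IsPrimPCAxis F η a → B a a = 1)
    (hA : IsPrimPCAxialAlgebra F A η) {a d : A} (ha : IsPrimPCAxis F η a)
    (hd : IsPrimPCAxis F η d) : B d = B a :=
  LinearMap.ext_on (span_isPrimPCAxis_eq_top h2 hηh hA) fun _ hc => by
    rw [hd.frobenius_eq_one B hB h2 hη1 hηh hηm1 hBnorm hc,
      ha.frobenius_eq_one B hB h2 hη1 hηh hηm1 hBnorm hc]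

theorem frobenius_eq_mul_of_isPrimPCAxis (h2 : (2 : F) ≠ 0) (hη1 : η ≠ 1)
    (hηh : η ≠ 1 / 2) (hηm1 : η ≠ -1)
    (hBnorm : ∀ a : A, IsPrimPCAxis F η a → B a a = 1) (hA : IsPrimPCAxialAlgebra F A η)
    {a : A} (ha : IsPrimPCAxis F η a) (x y : A) :
    B x y = B a x * B a y := by
  have h : B.flip y = B a y • B a :=
    LinearMap.ext_on (span_isPrimPCAxis_eq_top h2 hηh hA) fun d hd => by
      simp [frobenius_eq_of_isPrimPCAxis B hB h2 hη1 hηh hηm1 hBnorm hA ha hd,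
        ha.frobenius_eq_one B hB h2 hη1 hηh hηm1 hBnorm hd]
  simpa [mul_comm] using LinearMap.congr_fun h x

end RankOne

theorem stmt18_general (η : F) (h2 : (2 : F) ≠ 0) (hη1 : η ≠ 1) (hηh : η ≠ 1 / 2)
    (hA : IsPrimPCAxialAlgebra F A η)
    (B : A →ₗ[F] A →ₗ[F] F)
    (hBfrob : ∀ x y z : A, B (x * y) z = B x (y * z))
    (hBnorm : ∀ a : A, IsPrimPCAxis F η a → B a a = 1)
    (a : A) (ha : IsPrimPCAxis F η a) :
    (η = -1 → (3 : F) ≠ 0 → ∀ x y : A,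
      (a * x) * (a * y) = (1 / 4 : F) •
        ((6 * B a (x * y) - 3 * B x y) • a + B a y • x + B a x • y -
          (2 * B a y) • (a * x) - (2 * B a x) • (a * y) - x * y +
          (2 : F) • (x * (a * y)) + (2 : F) • (y * (a * x)))) ∧
    (η ≠ -1 → ∀ x y : A,
      (a * x) * (a * y) = (1 / 4 : F) •
        (((1 - 2 * η) * B a (x * y)) • a - (η * B a y) • x - (η * B a x) • y +
          (2 * η * B a y) • (a * x) + (2 * η * B a x) • (a * y) - x * y +
          (2 : F) • (x * (a * y)) + (2 : F) • (y * (a * x)))) := by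
  have h4 : (1 / 4 : F) * 4 = 1 := one_div_mul_cancel (by
    rw [show (4 : F) = 2 * 2 by norm_num]; exact mul_ne_zero h2 h2)
  have hquarter (x y : A) :
      (a * x) * (a * y) = (1 / 4 : F) • (4 : F) • ((a * x) * (a * y)) := by
    rw [smul_smul, h4, one_smul]
  have key := ha.four_smul_mul_mul B hBfrob h2 hη1 hηh (hBnorm a ha)
  refine ⟨fun hη _ x y => ?_, fun hηm1 x y => ?_⟩
  · rw [hquarter, key, hη]
    congr 1
    module
  · have hw := frobenius_eq_mul_of_isPrimPCAxis B hBfrob h2 hη1 hηh hηm1 hBnorm hA ha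
    have hBaxy : B a (x * y) = B a x * B a y := by
      rw [← hBfrob, hw (a * x) y, ← hBfrob, ha.1.idem]
    rw [hquarter, key, hw x y, hBaxy]
    congr 1
    module

/-- the product `(ax)(ay)` for a primitive axis `a`: the `η = -1` case
(characteristic `≠ 3`) in terms of the normalized Frobenius form, and the `η ≠ -1` case in
terms of the weight homomorphism `w = (a, ·)`. -/
theorem stmt18 (η : F) (h2 : (2 : F) ≠ 0) (hη1 : η ≠ 1) (hηh : η ≠ 1 / 2)
    (hA : IsPrimPCAxialAlgebra F A η)
    (B : A →ₗ[F] A →ₗ[F] F) (hB0 : B ≠ 0)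
    (hBsymm : ∀ x y : A, B x y = B y x)
    (hBfrob : ∀ x y z : A, B (x * y) z = B x (y * z))
    (hBnorm : ∀ a : A, IsPrimPCAxis F η a → B a a = 1)
    (a : A) (ha : IsPrimPCAxis F η a) :
    (η = -1 → (3 : F) ≠ 0 → ∀ x y : A,
      (a * x) * (a * y) = (1 / 4 : F) •
        ((6 * B a (x * y) - 3 * B x y) • a + B a y • x + B a x • y -
          (2 * B a y) • (a * x) - (2 * B a x) • (a * y) - x * y +
          (2 : F) • (x * (a * y)) + (2 : F) • (y * (a * x)))) ∧
    (η ≠ -1 → ∀ x y : A,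
      (a * x) * (a * y) = (1 / 4 : F) •
        (((1 - 2 * η) * B a (x * y)) • a - (η * B a y) • x - (η * B a x) • y +
          (2 * η * B a y) • (a * x) + (2 * η * B a x) • (a * y) - x * y +
          (2 : F) • (x * (a * y)) + (2 : F) • (y * (a * x)))) :=
  stmt18_general η h2 hη1 hηh hA B hBfrob hBnorm a ha
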